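/- arXiv:1909.06105 — 2 statements merged into one kernel-verified Lean document; each statement's English description precedes it below -/
import Mathlib

section
/- Let P be a finite point set in general position in the plane, p a vertex of the convex hull of P with hull-neighbors p⁻ and p⁺ such that the interior of triangle p⁻ p p⁺ contains no point of P. Then every point of P \ {p} that was an interior point of P is still an interior point of P \ {p}; i.e., B(P \ {p}) = (B(P) \ {p}). -/
/-- Points of the plane. -/
abbrev Pt := ℝ × ℝ

/-- A finite point set is in general position if no three of its points are collinear. -/
def GenPos (P : Finset Pt) : Prop :=
  ∀ p ∈ P, ∀ q ∈ P, ∀ r ∈ P, p ≠ q → q ≠ r → p ≠ r → ¬ Collinear ℝ ({p, q, r} : Set Pt)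

open Classical in
/-- The vertices of the convex hull of `P`. -/
noncomputable def hullB (P : Finset Pt) : Finset Pt :=
  P.filter (fun p => p ∉ convexHull ℝ ((P : Set Pt) \ {p}))

open Classical in
/-- The interior points of `P` (the points that are not hull vertices). -/
noncomputable def intI (P : Finset Pt) : Finset Pt := P \ hullB P

/-- A closed convex polygon with vertices in `P`. -/
def IsPolygonOn (P : Finset Pt) (C : Set Pt) : Prop :=
  ∃ V : Finset Pt, V ⊆ P ∧ 3 ≤ V.card ∧ C = convexHull ℝ (V : Set Pt)

/-- A convex decomposition of a region `R` with respect to `P`: closed convex polygons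
with vertices in `P`, pairwise disjoint interiors, union `R`, and no point of `P`
in the interior of any polygon. -/
def IsConvexDecompOfRegion (P : Finset Pt) (R : Set Pt) (D : Finset (Set Pt)) : Prop :=
  (∀ C ∈ D, IsPolygonOn P C) ∧
  (∀ C ∈ D, ∀ C' ∈ D, C ≠ C' → interior C ∩ interior C' = ∅) ∧
  (⋃ C ∈ D, C) = R ∧
  (∀ C ∈ D, ∀ p ∈ P, (p : Pt) ∉ interior C)

/-- A convex decomposition of the point set `P`. -/
def IsConvexDecomp (P : Finset Pt) (D : Finset (Set Pt)) : Prop :=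
  IsConvexDecompOfRegion P (convexHull ℝ (P : Set Pt)) D

/-- `uMin P` is the minimum number of polygons in a convex decomposition of `P`. -/
noncomputable def uMin (P : Finset Pt) : ℕ :=
  sInf {n | ∃ D : Finset (Set Pt), IsConvexDecomp P D ∧ D.card = n}

/-- `p` and `q` are the endpoints of an edge of the convex hull of `P`. -/
def IsHullEdge (P : Finset Pt) (p q : Pt) : Prop :=
  p ∈ hullB P ∧ q ∈ hullB P ∧ p ≠ q ∧
    segment ℝ p q ⊆ frontier (convexHull ℝ (P : Set Pt))

/-- `H` is the open half-plane with `q` and `q'` on its boundary containing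
no point of `I` (the outer half-plane of the edge `q q'` of `CH(I)`). -/
def IsOuterHalf (I : Finset Pt) (q q' : Pt) (H : Set Pt) : Prop :=
  ∃ f : Pt →ₗ[ℝ] ℝ, f ≠ 0 ∧ f q = f q' ∧ H = {x | f q < f x} ∧ ∀ r ∈ I, f r ≤ f q

/-- The angular domain at `a` bounded by the rays from `a` through `b` and through `c`,
containing the segment `b c`. -/
def angDom (a b c : Pt) : Set Pt :=
  {x | ∃ s t : ℝ, 0 ≤ s ∧ 0 ≤ t ∧ x = a + s • (b - a) + t • (c - a)}

/-- Every triangle of three consecutive hull vertices of `P` contains a point of `P`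
in its interior. -/
def TripleFilled (P : Finset Pt) : Prop :=
  ∀ a p c : Pt, IsHullEdge P a p → IsHullEdge P p c → a ≠ c →
    (interior (convexHull ℝ ({a, p, c} : Set Pt)) ∩ (P : Set Pt)).Nonempty

/-- Every outer open half-plane of a hull edge of `I(P)` contains exactly one
hull vertex of `P`. -/
def OuterOne (P : Finset Pt) : Prop :=
  ∀ q q' H, IsHullEdge (intI P) q q' → IsOuterHalf (intI P) q q' H →
    ((hullB P : Set Pt) ∩ H).ncard = 1

/-! If an interior point `x ≠ p` of `P` became a hull vertex of `P \ {p}`, a linear functional `g`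
would separate `x` strictly from `P \ {p, x}`, and `g p ≤ g x` because `x ∈ conv (P \ {x})`.
Together with the supporting functionals of the hull edges `pm p` and `p pp`, this makes all three
barycentric coordinates of `x` with respect to the triangle `pm p pp` positive, so `x` would lie
in the open triangle, which is empty. -/

open Module

theorem collinear_of_forall_apply_eq {E : Type*} [AddCommGroup E] [Module ℝ E]
    (hE : finrank ℝ E = 2) {f : E →ₗ[ℝ] ℝ} (hf : f ≠ 0) {s : Set E}
    {c : ℝ} (hs : ∀ x ∈ s, f x = c) : Collinear ℝ s := by
  have hspan : vectorSpan ℝ s ≤ LinearMap.ker f := by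
    rw [vectorSpan_def, Submodule.span_le]
    rintro _ ⟨u, hu, v, hv, rfl⟩
    simp [hs u hu, hs v hv]
  have hrange : 1 ≤ finrank ℝ (LinearMap.range f) := by
    rw [Nat.one_le_iff_ne_zero, Ne, Submodule.finrank_eq_zero, LinearMap.range_eq_bot]
    exact hf
  have : FiniteDimensional ℝ E := Module.finite_of_finrank_eq_succ hE
  have hker := LinearMap.finrank_range_add_finrank_ker f
  rw [collinear_iff_finrank_le_one]
  exact (Submodule.finrank_mono hspan).trans (by omega)

namespace AffineBasis

variable {ι E : Type*} [Fintype ι] [AddCommGroup E] [Module ℝ E]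
  (b : AffineBasis ι ℝ E) (f : E →ₗ[ℝ] ℝ) {x : E}

theorem sum_coord_mul_apply_sub (x : E) (m : ℝ) :
    ∑ j, b.coord j x * (f (b j) - m) = f x - m := by
  have hfx : ∑ j, b.coord j x * f (b j) = f x := by
    conv_rhs => rw [← b.linear_combination_coord_eq_self x, map_sum]
    simp only [map_smul, smul_eq_mul]
  simp [mul_sub, Finset.sum_sub_distrib, ← Finset.sum_mul, b.sum_coord_apply_eq_one, hfx]

theorem coord_pos_of_apply_lt {i : ι} {m : ℝ} (hb : ∀ j ≠ i, f (b j) = m) (hi : f (b i) < m)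
    (hx : f x < m) : 0 < b.coord i x := by
  have h := b.sum_coord_mul_apply_sub f x m
  rw [Finset.sum_eq_single i (fun j _ hj => by rw [hb j hj, sub_self, mul_zero])
    (by simp)] at h
  nlinarith

theorem coord_pos_of_apply_le {i k : ι} (hk : k ≠ i) (hpos : ∀ j ≠ i, 0 < b.coord j x)
    (hlt : ∀ j ≠ i, f x < f (b j)) (hi : f (b i) ≤ f x) : 0 < b.coord i x := by
  by_contra! hci
  have hsum : 0 < ∑ j, b.coord j x * (f (b j) - f x) := by
    refine Finset.sum_pos' (fun j _ => ?_) ⟨k, Finset.mem_univ k, ?_⟩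
    · by_cases hj : j = i
      · subst hj; exact mul_nonneg_of_nonpos_of_nonpos hci (by linarith)
      · exact mul_nonneg (hpos j hj).le (by linarith [hlt j hj])
    · exact mul_pos (hpos k hk) (by linarith [hlt k hk])
  rw [b.sum_coord_mul_apply_sub f x (f x), sub_self] at hsum
  exact hsum.false

end AffineBasis

def AffineBasis.ofNotCollinear {E : Type*} [AddCommGroup E] [Module ℝ E]
    (hE : finrank ℝ E = 2) {a b c : E} (habc : ¬ Collinear ℝ ({a, b, c} : Set E)) :
    AffineBasis (Fin 3) ℝ E :=
  have : FiniteDimensional ℝ E := Module.finite_of_finrank_eq_succ hE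
  have hind : AffineIndependent ℝ ![a, b, c] := affineIndependent_iff_not_collinear_set.mpr habc
  ⟨![a, b, c], hind, hind.affineSpan_eq_top_iff_card_eq_finrank_add_one.mpr (by simp [hE])⟩

section Plane

variable {E : Type*} [NormedAddCommGroup E] [NormedSpace ℝ E] {a b c : E}

theorem AffineBasis.range_ofNotCollinear (hE : finrank ℝ E = 2)
    (habc : ¬ Collinear ℝ ({a, b, c} : Set E)) : Set.range (ofNotCollinear hE habc) = {a, b, c} := by
  change Set.range ![a, b, c] = _
  simp only [Matrix.range_cons, Matrix.range_empty, Set.union_empty, Set.singleton_union]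

theorem interior_convexHull_nonempty_of_not_collinear (hE : finrank ℝ E = 2)
    (habc : ¬ Collinear ℝ ({a, b, c} : Set E)) {s : Set E} (hs : {a, b, c} ⊆ s) :
    (interior (convexHull ℝ s)).Nonempty := by
  have h := (AffineBasis.ofNotCollinear hE habc).centroid_mem_interior_convexHull
  rw [AffineBasis.range_ofNotCollinear] at h
  exact ⟨_, interior_mono (convexHull_mono hs) h⟩

theorem mem_interior_convexHull_triple (hE : finrank ℝ E = 2)
    (habc : ¬ Collinear ℝ ({a, b, c} : Set E)) {x : E} {f₁ f₂ g : E →ₗ[ℝ] ℝ}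
    (hf₁ : f₁ a = f₁ b) (hf₁c : f₁ c < f₁ a) (hf₁x : f₁ x < f₁ a)
    (hf₂ : f₂ b = f₂ c) (hf₂a : f₂ a < f₂ b) (hf₂x : f₂ x < f₂ b)
    (hgb : g b ≤ g x) (hga : g x < g a) (hgc : g x < g c) :
    x ∈ interior (convexHull ℝ ({a, b, c} : Set E)) := by
  set B := AffineBasis.ofNotCollinear hE habc
  have hB0 : B 0 = a := rfl
  have hB1 : B 1 = b := rfl
  have hB2 : B 2 = c := rfl
  have hc : 0 < B.coord 2 x :=
    B.coord_pos_of_apply_lt f₁ (by intro j hj; fin_cases j <;> simp_all) hf₁c hf₁x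
  have ha : 0 < B.coord 0 x :=
    B.coord_pos_of_apply_lt f₂ (by intro j hj; fin_cases j <;> simp_all) hf₂a hf₂x
  have hb : 0 < B.coord 1 x := by
    refine B.coord_pos_of_apply_le g (k := 0) (by decide) ?_ ?_ hgb
    · intro j hj; fin_cases j <;> simp_all
    · intro j hj; fin_cases j <;> simp_all
  rw [← AffineBasis.range_ofNotCollinear hE habc, B.interior_convexHull]
  intro i
  fin_cases i
  exacts [ha, hb, hc]

end Plane

section Separation

variable {E : Type*} [NormedAddCommGroup E] [NormedSpace ℝ E] {s : Set E} {x : E}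

theorem notMem_convexHull_of_forall_lt (g : E →ₗ[ℝ] ℝ) (h : ∀ r ∈ s, g x < g r) :
    x ∉ convexHull ℝ s := fun hx =>
  lt_irrefl (g x) <| convexHull_min h (convex_halfSpace_gt g.isLinear (g x)) hx

theorem exists_forall_lt_of_notMem_convexHull (hs : s.Finite) (hx : x ∉ convexHull ℝ s) :
    ∃ g : E →ₗ[ℝ] ℝ, ∀ r ∈ s, g x < g r := by
  obtain ⟨g, u, hxu, hu⟩ := geometric_hahn_banach_point_closed (convex_convexHull ℝ s)
    (hs.isCompact_convexHull ℝ).isClosed hx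
  exact ⟨g, fun r hr => hxu.trans (hu r (subset_convexHull ℝ s hr))⟩

end Separation

theorem finrank_Pt : finrank ℝ Pt = 2 := by
  simp [Pt, Module.finrank_prod]

theorem mem_hullB {P : Finset Pt} {p : Pt} :
    p ∈ hullB P ↔ p ∈ P ∧ p ∉ convexHull ℝ ((P : Set Pt) \ {p}) := by
  classical exact Finset.mem_filter

theorem IsHullEdge.exists_functional {P : Finset Pt} (hgp : GenPos P) {a b : Pt}
    (h : IsHullEdge P a b) (hint : (interior (convexHull ℝ (P : Set Pt))).Nonempty) :
    ∃ f : Pt →ₗ[ℝ] ℝ, f a = f b ∧ ∀ r ∈ P, r ≠ a → r ≠ b → f r < f a := by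
  obtain ⟨haB, hbB, hab, hseg⟩ := h
  have haP := (mem_hullB.1 haB).1
  have hbP := (mem_hullB.1 hbB).1
  have hm : midpoint ℝ a b ∉ interior (convexHull ℝ (P : Set Pt)) :=
    (hseg (midpoint_mem_segment a b)).2
  obtain ⟨f, u, hf0, hle, hu⟩ := geometric_hahn_banach_of_nonempty_interior
    (convex_convexHull ℝ _) (convex_singleton _) (Set.disjoint_singleton_right.2 hm) hint
    (Set.singleton_nonempty _)
  have hP : ∀ r ∈ P, f r ≤ u := fun r hr => hle r (subset_convexHull ℝ _ hr)
  have hmid : f (midpoint ℝ a b) = (f a + f b) / 2 := by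
    rw [midpoint_eq_smul_add, map_smul, map_add, smul_eq_mul, invOf_eq_inv]
    ring
  have hum := hu _ rfl
  have hfa : f a = u := by linarith [hP a haP, hP b hbP]
  have hfb : f b = u := by linarith [hP a haP, hP b hbP]
  refine ⟨f, hfa.trans hfb.symm, fun r hr hra hrb => hfa ▸ (hP r hr).lt_of_ne fun hr' => ?_⟩
  refine hgp a haP b hbP r hr hab (Ne.symm hrb) (Ne.symm hra) ?_
  refine collinear_of_forall_apply_eq finrank_Pt (f := f.toLinearMap) (c := u) ?_ ?_
  · exact fun h0 => hf0 (ContinuousLinearMap.coe_injective h0)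
  · rintro _ (rfl | rfl | rfl) <;> assumption

theorem mem_convexHull_erase_of_empty_ear {P : Finset Pt} (hgp : GenPos P) {pm p pp : Pt}
    (h1 : IsHullEdge P pm p) (h2 : IsHullEdge P p pp) (hne : pm ≠ pp)
    (hempty : interior (convexHull ℝ ({pm, p, pp} : Set Pt)) ∩ (P : Set Pt) = ∅)
    {x : Pt} (hxP : x ∈ P) (hxp : x ≠ p) (hx : x ∈ convexHull ℝ ((P : Set Pt) \ {x})) :
    x ∈ convexHull ℝ (((P.erase p : Finset Pt) : Set Pt) \ {x}) := by
  by_contra hcon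
  have hpm := mem_hullB.1 h1.1
  have hp := mem_hullB.1 h1.2.1
  have hpp := mem_hullB.1 h2.2.1
  have hxpm : x ≠ pm := by rintro rfl; exact hpm.2 hx
  have hxpp : x ≠ pp := by rintro rfl; exact hpp.2 hx
  have hncol := hgp pm hpm.1 p hp.1 pp hpp.1 h1.2.2.1 h2.2.2.1 hne
  have hint := interior_convexHull_nonempty_of_not_collinear finrank_Pt hncol
    (s := P) (by simp [Set.insert_subset_iff, hpm.1, hp.1, hpp.1])
  obtain ⟨f₁, hf₁, hf₁P⟩ := h1.exists_functional hgp hint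
  obtain ⟨f₂, hf₂, hf₂P⟩ := h2.exists_functional hgp hint
  obtain ⟨g, hg⟩ := exists_forall_lt_of_notMem_convexHull (P.erase p).finite_toSet.sdiff hcon
  have hgP : ∀ r ∈ P, r ≠ p → r ≠ x → g x < g r := fun r hr hrp hrx =>
    hg r ⟨Finset.mem_erase.2 ⟨hrp, hr⟩, hrx⟩
  -- Otherwise `g` would also separate `x` from `P \ {x}`.
  have hgpx : g p ≤ g x := by
    by_contra! hlt
    refine notMem_convexHull_of_forall_lt g (fun r hr => ?_) hx
    obtain ⟨hr, hrx⟩ := hr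
    by_cases hrp : r = p
    · exact hrp ▸ hlt
    · exact hgP r hr hrp hrx
  refine (Set.eq_empty_iff_forall_notMem.1 hempty) x ⟨?_, hxP⟩
  exact mem_interior_convexHull_triple finrank_Pt hncol hf₁
    (hf₁P pp hpp.1 (Ne.symm hne) h2.2.2.1.symm) (hf₁P x hxP hxpm hxp)
    hf₂ (hf₂P pm hpm.1 h1.2.2.1 hne) (hf₂P x hxP hxp hxpp)
    hgpx (hgP pm hpm.1 h1.2.2.1 (Ne.symm hxpm)) (hgP pp hpp.1 h2.2.2.1.symm (Ne.symm hxpp))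

theorem hullB_erase_of_empty_ear_general (P : Finset Pt) (hgp : GenPos P)
    (pm p pp : Pt) (h1 : IsHullEdge P pm p) (h2 : IsHullEdge P p pp) (hne : pm ≠ pp)
    (hempty : interior (convexHull ℝ ({pm, p, pp} : Set Pt)) ∩ (P : Set Pt) = ∅) :
    hullB (P.erase p) = (hullB P).erase p := by
  ext x
  simp only [mem_hullB, Finset.mem_erase]
  constructor
  · rintro ⟨⟨hxp, hxP⟩, hx⟩
    exact ⟨hxp, hxP, fun hmem =>
      hx (mem_convexHull_erase_of_empty_ear hgp h1 h2 hne hempty hxP hxp hmem)⟩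
  · rintro ⟨hxp, hxP, hx⟩
    refine ⟨⟨hxp, hxP⟩, fun hmem => hx (convexHull_mono ?_ hmem)⟩
    exact Set.sdiff_subset_sdiff_left (Finset.coe_subset.2 (P.erase_subset p))

/-- If the open triangle formed by a hull vertex `p` and its hull neighbors contains
no point of `P`, then `B(P \ {p}) = B(P) \ {p}`: no interior point of `P` becomes a
hull vertex after removing `p`. -/
theorem hullB_erase_of_empty_ear (P : Finset Pt) (hgp : GenPos P) (hn : 4 ≤ P.card)
    (pm p pp : Pt) (h1 : IsHullEdge P pm p) (h2 : IsHullEdge P p pp) (hne : pm ≠ pp)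
    (hempty : interior (convexHull ℝ ({pm, p, pp} : Set Pt)) ∩ (P : Set Pt) = ∅) :
    hullB (P.erase p) = (hullB P).erase p :=
  hullB_erase_of_empty_ear_general P hgp pm p pp h1 h2 hne hempty
end

section
/- Let P be a finite point set in general position in the plane whose convex hull has vertices p_0,…,p_{b−1} counterclockwise with b ≥ 3, and suppose q is a hull vertex of I(P) with successor q⁺ on CH(I(P)) such that the open outer half-plane H(q) contains at least 3 hull vertices of P, say p_j, p_{j+1}, p_{j+2}. Then the interior of at least one triangle p_{k−1} p_k p_{k+1} (k ∈ {j+1}) contains no point of P. -/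
/-!
A point of `P` inside the triangle is not a hull vertex of `P`: a hull vertex is an extreme point
of `CH(P)`, hence of the triangle, and extreme points are never interior points. So it belongs
to `I(P)` and lies weakly on the inner side of the line `q q⁺`, whereas the whole triangle lies
in the open half-plane `H(q)`.
-/

theorem mem_extremePoints_convexHull_insert {𝕜 E : Type*} [Field 𝕜] [LinearOrder 𝕜]
    [IsStrictOrderedRing 𝕜] [AddCommGroup E] [Module 𝕜 E] {x : E} {B : Set E}
    (hx : x ∉ convexHull 𝕜 B) : x ∈ (convexHull 𝕜 (insert x B)).extremePoints 𝕜 := by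
  rcases B.eq_empty_or_nonempty with rfl | hB
  · simp
  refine ⟨subset_convexHull 𝕜 _ (Set.mem_insert x B), fun y hy z hz hxyz => ?_⟩
  simp only [convexHull_insert hB, mem_convexJoin, Set.mem_singleton_iff, exists_eq_left]
    at hy hz
  obtain ⟨b, hb, a₁, s, -, hs, has, rfl⟩ := hy
  obtain ⟨c, hc, a₂, t, -, ht, hat, rfl⟩ := hz
  obtain ⟨α, β, hα, hβ, hαβ, hcomb⟩ := hxyz
  obtain rfl : a₁ = 1 - s := eq_sub_of_add_eq has
  obtain rfl : a₂ = 1 - t := eq_sub_of_add_eq hat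
  obtain rfl : β = 1 - α := eq_sub_of_add_eq' hαβ
  set m := α * s + (1 - α) * t
  have hm_nonneg : 0 ≤ m := add_nonneg (mul_nonneg hα.le hs) (mul_nonneg hβ.le ht)
  -- Unless `y = z = x`, the identity below writes `x` as a convex combination of `b` and `c`.
  have hmx : m • x = (α * s) • b + ((1 - α) * t) • c := by
    linear_combination (norm := module) -hcomb
  rcases hm_nonneg.eq_or_lt with hm0 | hm0
  · have hs0 : s = 0 := by nlinarith [mul_nonneg hα.le hs, mul_nonneg hβ.le ht]
    have ht0 : t = 0 := by nlinarith [mul_nonneg hα.le hs, mul_nonneg hβ.le ht]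
    subst hs0 ht0
    simp
  · refine absurd ?_ hx
    convert convex_convexHull 𝕜 B hb hc (div_nonneg (mul_nonneg hα.le hs) hm0.le)
      (div_nonneg (mul_nonneg hβ.le ht) hm0.le) (by rw [← add_div, div_self hm0.ne']) using 1
    rw [div_eq_inv_mul, div_eq_inv_mul, mul_smul, mul_smul (m⁻¹), ← smul_add, ← hmx, smul_smul,
      inv_mul_cancel₀ hm0.ne', one_smul]

theorem notMem_interior_convexHull_of_notMem_convexHull_sdiff {E : Type*} [AddCommGroup E]
    [Module ℝ E] [TopologicalSpace E] [IsTopologicalAddGroup E] [ContinuousSMul ℝ E]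
    [Nontrivial E] {x : E} {A s : Set E} (hxA : x ∈ A) (hx : x ∉ convexHull ℝ (A \ {x}))
    (hs : s ⊆ A) : x ∉ interior (convexHull ℝ s) := by
  have hext : x ∈ (convexHull ℝ A).extremePoints ℝ := by
    simpa [Set.insert_eq_of_mem hxA] using mem_extremePoints_convexHull_insert hx
  intro hint
  exact Set.disjoint_left.1 (disjoint_interior_extremePoints _) hint
    (inter_extremePoints_subset_extremePoints_of_subset (convexHull_mono hs)
      ⟨interior_subset hint, hext⟩)

theorem mem_hullB_iff {P : Finset Pt} {x : Pt} :
    x ∈ hullB P ↔ x ∈ P ∧ x ∉ convexHull ℝ ((P : Set Pt) \ {x}) := by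
  simp [hullB]

theorem mem_intI_of_mem_interior_convexHull {P : Finset Pt} {s : Set Pt} {x : Pt}
    (hs : s ⊆ P) (hxP : x ∈ P) (hx : x ∈ interior (convexHull ℝ s)) : x ∈ intI P := by
  rw [intI, Finset.mem_sdiff, mem_hullB_iff]
  exact ⟨hxP, fun hxB => notMem_interior_convexHull_of_notMem_convexHull_sdiff hxB.1 hxB.2 hs hx⟩

theorem three_in_halfplane_empty_triangle_general (P : Finset Pt)
    (q q' : Pt) (H : Set Pt)
    (hH : IsOuterHalf (intI P) q q' H)
    (pj pj1 pj2 : Pt) (h1 : IsHullEdge P pj pj1) (h2 : IsHullEdge P pj1 pj2)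
    (hin : pj ∈ H) (hin1 : pj1 ∈ H) (hin2 : pj2 ∈ H) :
    interior (convexHull ℝ ({pj, pj1, pj2} : Set Pt)) ∩ (P : Set Pt) = ∅ := by
  obtain ⟨f, -, -, rfl, hf_le⟩ := hH
  have hverts : ({pj, pj1, pj2} : Set Pt) ⊆ P := by
    have hB : ∀ {y}, y ∈ hullB P → y ∈ (P : Set Pt) := fun hy => (mem_hullB_iff.1 hy).1
    exact Set.insert_subset_iff.2 ⟨hB h1.1, Set.pair_subset (hB h2.1) (hB h2.2.1)⟩
  have htri : convexHull ℝ ({pj, pj1, pj2} : Set Pt) ⊆ {x | f q < f x} :=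
    convexHull_min (Set.insert_subset_iff.2 ⟨hin, Set.pair_subset hin1 hin2⟩)
      (convex_halfSpace_gt f.isLinear (f q))
  refine Set.eq_empty_of_forall_notMem fun x ⟨hx, hxP⟩ => ?_
  have hxI := mem_intI_of_mem_interior_convexHull hverts hxP hx
  exact (hf_le x hxI).not_gt (htri (interior_subset hx))

/-- If the outer open half-plane of a hull edge `q q⁺` of `I(P)` contains three
consecutive hull vertices `p_j, p_{j+1}, p_{j+2}` of `P`, then the interior of the
triangle `p_j p_{j+1} p_{j+2}` contains no point of `P`. -/
theorem three_in_halfplane_empty_triangle (P : Finset Pt) (hgp : GenPos P)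
    (hi : (intI P).Nonempty) (q q' : Pt) (H : Set Pt)
    (hedge : IsHullEdge (intI P) q q') (hH : IsOuterHalf (intI P) q q' H)
    (pj pj1 pj2 : Pt) (h1 : IsHullEdge P pj pj1) (h2 : IsHullEdge P pj1 pj2)
    (hne : pj ≠ pj2) (hin : pj ∈ H) (hin1 : pj1 ∈ H) (hin2 : pj2 ∈ H) :
    interior (convexHull ℝ ({pj, pj1, pj2} : Set Pt)) ∩ (P : Set Pt) = ∅ :=
  three_in_halfplane_empty_triangle_general P q q' H hH pj pj1 pj2 h1 h2 hin hin1 hin2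
end
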